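/- arXiv:1508.03422 — 3 statements merged into one kernel-verified Lean document; each statement's English description precedes it below -/
import Mathlib

section
/- Let N ≥ 2, let ξ : Fin N → ℝ be class-dependent costs with 0 < ξ(k) ≤ 1 for all k, let n : Fin N be the true class, and let o : Fin N → ℝ be real-valued network outputs satisfying o(n) > o(k) for all k ≠ n. Then ξ(n) · exp(o(n)) / (∑_k ξ(k) · exp(o(k))) > ξ(n) / (∑_k ξ(k)). -/
open Finset

theorem sum_mul_lt_sum_mul_of_le_of_lt {ι : Type*} [Fintype ι] {w g : ι → ℝ} {n m : ι}
    (hw : ∀ k, 0 < w k) (hle : ∀ k, g k ≤ g n) (hlt : g m < g n) :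
    ∑ k, w k * g k < (∑ k, w k) * g n := by
  rw [sum_mul]
  exact sum_lt_sum (fun k _ => mul_le_mul_of_nonneg_left (hle k) (hw k).le)
    ⟨m, mem_univ m, mul_lt_mul_of_pos_left hlt (hw m)⟩

theorem div_sum_lt_mul_div_sum_mul {ι : Type*} [Fintype ι] {w g : ι → ℝ} {n m : ι}
    (hw : ∀ k, 0 < w k) (hg : ∀ k, 0 < g k) (hle : ∀ k, g k ≤ g n) (hlt : g m < g n) :
    w n / ∑ k, w k < w n * g n / ∑ k, w k * g k := by
  have hwg : 0 < ∑ k, w k * g k := sum_pos (fun k _ => mul_pos (hw k) (hg k)) ⟨n, mem_univ n⟩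
  calc w n / ∑ k, w k = w n * g n / ((∑ k, w k) * g n) := by
        rw [mul_div_mul_right _ _ (hg n).ne']
    _ < w n * g n / ∑ k, w k * g k :=
        div_lt_div_of_pos_left (mul_pos (hw n) (hg n)) hwg
          (sum_mul_lt_sum_mul_of_le_of_lt hw hle hlt)

/-- If the true class `n` has the strictly largest output, then its cost-sensitive
softmax score at `o` strictly exceeds its score at the all-zero guess point. -/
theorem cost_sensitive_softmax_gt_guess
    (N : ℕ) (hN : 2 ≤ N) (ξ : Fin N → ℝ) (hξ : ∀ k, 0 < ξ k ∧ ξ k ≤ 1)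
    (n : Fin N) (o : Fin N → ℝ) (ho : ∀ k, k ≠ n → o k < o n) :
    ξ n / (∑ k, ξ k) < ξ n * Real.exp (o n) / (∑ k, ξ k * Real.exp (o k)) := by
  have : Nontrivial (Fin N) := Fin.nontrivial_iff_two_le.mpr hN
  obtain ⟨m, hmn⟩ := exists_ne n
  have hle : ∀ k, Real.exp (o k) ≤ Real.exp (o n) := fun k => by
    rcases eq_or_ne k n with rfl | hk
    · rfl
    · exact (Real.exp_lt_exp.mpr (ho k hk)).le
  exact div_sum_lt_mul_div_sum_mul (fun k => (hξ k).1) (fun k => Real.exp_pos (o k)) hle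
    (Real.exp_lt_exp.mpr (ho m hmn))
end

section
/- (Guess aversion of the cost-sensitive cross-entropy loss.) Let N ≥ 2, let ξ : Fin N → ℝ be class-dependent costs with 0 < ξ(k) ≤ 1 for all k, let n : Fin N be the true class, and let o : Fin N → ℝ satisfy o(n) > o(k) for all k ≠ n. Then the cost-sensitive cross-entropy loss at o is strictly smaller than at the all-zero guess point: −log( ξ(n)·exp(o(n)) / ∑_k ξ(k)·exp(o(k)) ) < −log( ξ(n) / ∑_k ξ(k) ). -/
/-- Guess aversion of the cost-sensitive cross-entropy loss: if the true class `n`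
has the strictly largest output, the loss at `o` is strictly smaller than at the
all-zero guess point. -/
theorem cost_sensitive_CE_guess_averse
    (N : ℕ) (hN : 2 ≤ N) (ξ : Fin N → ℝ) (hξ : ∀ k, 0 < ξ k ∧ ξ k ≤ 1)
    (n : Fin N) (o : Fin N → ℝ) (ho : ∀ k, k ≠ n → o k < o n) :
    -Real.log (ξ n * Real.exp (o n) / (∑ k, ξ k * Real.exp (o k))) <
      -Real.log (ξ n / (∑ k, ξ k)) := by
  have hS0 : 0 < ∑ k, ξ k :=
    Finset.sum_pos (fun k _ => (hξ k).1) ⟨n, Finset.mem_univ n⟩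
  have hS1 : 0 < ∑ k, ξ k * Real.exp (o k) :=
    Finset.sum_pos (fun k _ => mul_pos (hξ k).1 (Real.exp_pos _)) ⟨n, Finset.mem_univ n⟩
  -- key: ∑ ξk e^{ok} < e^{on} ∑ ξk
  have hm : ∃ m : Fin N, m ≠ n := by
    have : 1 < Fintype.card (Fin N) := by simpa using (show 1 < N by omega)
    exact Fintype.exists_ne_of_one_lt_card this n
  obtain ⟨m, hmn⟩ := hm
  have key : (∑ k, ξ k * Real.exp (o k)) < ∑ k, ξ k * Real.exp (o n) := by
    apply Finset.sum_lt_sum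
    · intro k _
      rcases eq_or_ne k n with rfl | hk
      · exact le_rfl
      · exact le_of_lt (by
          exact mul_lt_mul_of_pos_left (Real.exp_lt_exp.2 (ho k hk)) (hξ k).1)
    · exact ⟨m, Finset.mem_univ m,
        mul_lt_mul_of_pos_left (Real.exp_lt_exp.2 (ho m hmn)) (hξ m).1⟩
  have key' : (∑ k, ξ k * Real.exp (o k)) < Real.exp (o n) * ∑ k, ξ k := by
    calc (∑ k, ξ k * Real.exp (o k)) < ∑ k, ξ k * Real.exp (o n) := key
    _ = Real.exp (o n) * ∑ k, ξ k := by rw [← Finset.sum_mul, mul_comm]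
  have hB : 0 < ξ n / (∑ k, ξ k) := div_pos (hξ n).1 hS0
  have hlt : ξ n / (∑ k, ξ k) < ξ n * Real.exp (o n) / (∑ k, ξ k * Real.exp (o k)) := by
    rw [div_lt_div_iff₀ hS0 hS1]
    calc ξ n * (∑ k, ξ k * Real.exp (o k)) < ξ n * (Real.exp (o n) * ∑ k, ξ k) :=
          mul_lt_mul_of_pos_left key' (hξ n).1
    _ = ξ n * Real.exp (o n) * ∑ k, ξ k := by ring
  exact neg_lt_neg (Real.log_lt_log hB hlt)
end

section
/- (Stationarity characterization for the cost-sensitive cross-entropy risk.) Let N ≥ 1, let ξ : Fin N → Fin N → ℝ satisfy ξ(p,k) > 0 for all p, k, let P : Fin N → ℝ be a probability vector, and let o : Fin N → ℝ. If the partial derivative of the expected risk R(o) = −∑_p P(p) · log( ξ(p,p)·exp(o(p)) / ∑_k ξ(p,k)·exp(o(k)) ) with respect to o(t) vanishes at o, then P(t) = exp(o(t)) · ∑_p P(p) · ξ(p,t) / ( ∑_k ξ(p,k)·exp(o(k)) ). In particular, if additionally P(t) > 0, then o(t) = log P(t) − log( ∑_p P(p) · ξ(p,t) / ( ∑_k ξ(p,k)·exp(o(k))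 ) ), exhibiting the inverse relationship between the optimal output for class t and the Bayes cost of class t. -/
/-- Stationarity characterization for the cost-sensitive cross-entropy risk: if the
partial derivative with respect to `o t` vanishes at `o`, then
`P t = exp (o t) · ∑_p P p · ξ p t / (∑_k ξ p k · exp (o k))`, and if moreover
`P t > 0` then `o t = log (P t) - log (∑_p P p · ξ p t / (∑_k ξ p k · exp (o k)))`. -/
theorem cost_sensitive_CE_risk_stationarity
    (N : ℕ) (hN : 1 ≤ N) (ξ : Fin N → Fin N → ℝ) (hξ : ∀ p k, 0 < ξ p k)
    (P : Fin N → ℝ) (hP0 : ∀ p, 0 ≤ P p) (hP1 : ∑ p, P p = 1)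
    (o : Fin N → ℝ) (t : Fin N)
    (hstat : HasDerivAt
      (fun s => -∑ p, P p * Real.log (ξ p p * Real.exp (Function.update o t s p) /
        ∑ k, ξ p k * Real.exp (Function.update o t s k))) 0 (o t)) :
    P t = Real.exp (o t) * ∑ p, P p * ξ p t / (∑ k, ξ p k * Real.exp (o k)) ∧
    (0 < P t →
      o t = Real.log (P t) -
        Real.log (∑ p, P p * ξ p t / (∑ k, ξ p k * Real.exp (o k)))) := by
  classical
  set C : Fin N → ℝ := fun p => ∑ k ∈ Finset.univ.erase t, ξ p k * Real.exp (o k) with hC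
  have hCnn : ∀ p, 0 ≤ C p := fun p =>
    Finset.sum_nonneg fun k _ => le_of_lt (mul_pos (hξ p k) (Real.exp_pos _))
  -- rewrite the inner sum
  have hsum : ∀ p s, (∑ k, ξ p k * Real.exp (Function.update o t s k))
      = C p + ξ p t * Real.exp s := by
    intro p s
    have : (fun k => ξ p k * Real.exp (Function.update o t s k))
        = Function.update (fun k => ξ p k * Real.exp (o k)) t (ξ p t * Real.exp s) := by
      funext k
      by_cases hk : k = t
      · subst hk; simp
      · simp [Function.update_apply, hk]
    rw [this, Finset.sum_update_of_mem (Finset.mem_univ t), add_comm]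
    simp [hC, Finset.erase_eq]
  have hDpos : ∀ p s, 0 < C p + ξ p t * Real.exp s := fun p s =>
    add_pos_of_nonneg_of_pos (hCnn p) (mul_pos (hξ p t) (Real.exp_pos _))
  -- rewrite the risk function
  have hfun : (fun s => -∑ p, P p * Real.log (ξ p p * Real.exp (Function.update o t s p) /
        ∑ k, ξ p k * Real.exp (Function.update o t s k)))
      = (fun s => -∑ p, P p * (Real.log (ξ p p) + (if p = t then s else o p)
          - Real.log (C p + ξ p t * Real.exp s))) := by
    funext s
    congr 1
    apply Finset.sum_congr rfl
    intro p _
    rw [hsum]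
    rw [Real.log_div (ne_of_gt (mul_pos (hξ p p) (Real.exp_pos _))) (ne_of_gt (hDpos p s)),
      Real.log_mul (ne_of_gt (hξ p p)) (Real.exp_ne_zero _), Real.log_exp,
      Function.update_apply]
  -- derivative of the rewritten function
  have key : HasDerivAt (fun s => -∑ p, P p * (Real.log (ξ p p) + (if p = t then s else o p)
          - Real.log (C p + ξ p t * Real.exp s)))
      (-∑ p, P p * ((if p = t then 1 else 0)
        - ξ p t * Real.exp (o t) / (C p + ξ p t * Real.exp (o t)))) (o t) := by
    apply HasDerivAt.neg
    apply HasDerivAt.fun_sum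
    intro p _
    apply HasDerivAt.const_mul
    have h1 : HasDerivAt (fun s : ℝ => if p = t then s else o p)
        (if p = t then 1 else 0) (o t) := by
      by_cases hp : p = t
      · simpa [hp] using (hasDerivAt_id' (o t))
      · simpa [hp] using (hasDerivAt_const (o t) (o p))
    have h2 : HasDerivAt (fun s : ℝ => Real.log (C p + ξ p t * Real.exp s))
        (ξ p t * Real.exp (o t) / (C p + ξ p t * Real.exp (o t))) (o t) := by
      have := ((Real.hasDerivAt_exp (o t)).const_mul (ξ p t)).const_add (C p)
      exact this.log (ne_of_gt (hDpos p (o t)))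
    exact ((h1.const_add (Real.log (ξ p p))).sub h2)
  rw [hfun] at hstat
  have h0 := hstat.unique key
  have hCD : ∀ p, C p + ξ p t * Real.exp (o t) = ∑ k, ξ p k * Real.exp (o k) := by
    intro p
    rw [← hsum p (o t)]
    congr 1
    funext k
    simp [Function.update_eq_self]
  have hDpos' : ∀ p, (0:ℝ) < ∑ k, ξ p k * Real.exp (o k) := fun p => by
    rw [← hCD p]; exact hDpos p (o t)
  have hmain : P t = Real.exp (o t) * ∑ p, P p * ξ p t / (∑ k, ξ p k * Real.exp (o k)) := by
    have h1 : ∑ p, P p * ((if p = t then 1 else 0)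
        - ξ p t * Real.exp (o t) / (C p + ξ p t * Real.exp (o t))) = 0 := by
      have := neg_eq_zero.mp h0.symm
      linarith
    simp only [mul_sub, hCD] at h1
    rw [Finset.sum_sub_distrib] at h1
    have hA : ∑ p, P p * (if p = t then 1 else 0) = P t := by
      simp [mul_ite, Finset.sum_ite_eq']
    have hB : ∑ p, P p * (ξ p t * Real.exp (o t) / (∑ k, ξ p k * Real.exp (o k)))
        = Real.exp (o t) * ∑ p, P p * ξ p t / (∑ k, ξ p k * Real.exp (o k)) := by
      rw [Finset.mul_sum]
      apply Finset.sum_congr rfl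
      intro p _
      ring
    rw [hA, hB] at h1
    linarith
  refine ⟨hmain, fun hPt => ?_⟩
  set S : ℝ := ∑ p, P p * ξ p t / (∑ k, ξ p k * Real.exp (o k)) with hS
  have hSpos : 0 < S := by
    by_contra h
    push_neg at h
    nlinarith [Real.exp_pos (o t)]
  rw [hmain, Real.log_mul (Real.exp_ne_zero _) (ne_of_gt hSpos), Real.log_exp]
  ring
end
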